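/- In a one-dimensional convex cellular network, suppose the left-to-right greedy orthogonal scheme selects the messages S_{i1} → D_{j1}, ..., S_{in} → D_{jn}. Then the message set partitions into n blocks, the k-th block consisting of messages originating from sources S_{ik},...,S_{i(k+1)-1} or intended for destinations D_{jk},...,D_{j(k+1)-1}, such that each block induces an acyclic demand graph. -/

import Mathlib

/-!
Every message lies in the block of the last greedy message weakly to its lower left, and the
greedy positions increase, so the blocks partition the messages.

An alternating cycle must somewhere pass from a pair with the destination left of the source to
a pair with the destination right of the source: otherwise convexity makes the sources strictly
increase, or the destinations strictly decrease, all the way around the cycle. At such a flip,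
convexity makes the cycle's message `s j → d (j + 1)` orthogonal to every message lying weakly
to the lower left of the whole cycle, in particular to the greedy message `σ k → δ k` of its
block. This contradicts termination of the scheme in the last block. In an earlier block,
minimality of `σ (k + 1) → δ (k + 1)` and the block bound put `σ (k + 1)` strictly left of
`s j` and `d (j + 1)` strictly left of `δ (k + 1)`; convexity then makes `σ (k + 1) → d (j + 1)`
a message orthogonal to `σ k → δ k` that the greedy scheme would have preferred to
`σ (k + 1) → δ (k + 1)`.
-/

/-- A one-dimensional convex cellular network: sources and destinations are
placed at (distinct) positions on the real line; `desired s d` means source `s`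
has a desired message for destination `d`; `heard s d` means `d` can hear `s`
(nonzero channel).  The fields are the destination- and source-convexity
properties of the paper, plus non-degeneracy (desired implies heard). -/
structure IsConvexCellular {Src Dst : Type*} (posS : Src → ℝ) (posD : Dst → ℝ)
    (desired heard : Src → Dst → Prop) : Prop where
  posS_inj : Function.Injective posS
  posD_inj : Function.Injective posD
  pos_ne : ∀ s d, posS s ≠ posD d
  desired_heard : ∀ s d, desired s d → heard s d
  /-- Destination convexity (a): a desired source on the left forces all closer
  sources on the left to be desired. -/
  destConvL : ∀ s1 s2 d, posS s1 < posS s2 → posS s2 < posD d → desired s1 d → desired s2 d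
  /-- Destination convexity (b): right side. -/
  destConvR : ∀ s1 s2 d, posS s2 < posS s1 → posD d < posS s2 → desired s1 d → desired s2 d
  /-- Destination convexity (c): an unheard source on the left forces all farther
  sources on the left to be unheard. -/
  destHearL : ∀ s1 s2 d, posS s1 < posS s2 → posS s2 < posD d → ¬ heard s2 d → ¬ heard s1 d
  /-- Destination convexity (d): right side. -/
  destHearR : ∀ s1 s2 d, posS s2 < posS s1 → posD d < posS s2 → ¬ heard s2 d → ¬ heard s1 d
  /-- Source convexity (a). -/
  srcConvL : ∀ d1 d2 s, posD d1 < posD d2 → posD d2 < posS s → desired s d1 → desired s d2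
  /-- Source convexity (b). -/
  srcConvR : ∀ d1 d2 s, posD d2 < posD d1 → posS s < posD d2 → desired s d1 → desired s d2
  /-- Source convexity (c). -/
  srcHearL : ∀ d1 d2 s, posD d1 < posD d2 → posD d2 < posS s → ¬ heard s d2 → ¬ heard s d1
  /-- Source convexity (d). -/
  srcHearR : ∀ d1 d2 s, posD d2 < posD d1 → posS s < posD d2 → ¬ heard s d2 → ¬ heard s d1

/-- The demand graph induced by the message set `W` has an alternating cycle:
a closed cyclic sequence of distinct sources and distinct destinations
alternating non-hearing edges with desired edges that are messages of `W`. -/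
def HasAltCycleIn {Src Dst : Type*} (W heard : Src → Dst → Prop) : Prop :=
  ∃ (n : ℕ) (s : Fin (n + 1) → Src) (d : Fin (n + 1) → Dst),
    Function.Injective s ∧ Function.Injective d ∧
    ∀ k, ¬ heard (s k) (d k) ∧ W (s k) (d (k + 1))

/-- Membership of message `S → D` in the `k`-th block determined by the greedy
selections `σ, δ`: it consists of the messages originating from a source in
`[σ k, σ (k+1))` or intended for a destination in `[δ k, δ (k+1))` (not already
in an earlier block); the last block has no upper constraint. -/
def InBlock {Src Dst : Type*} (posS : Src → ℝ) (posD : Dst → ℝ)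
    (desired : Src → Dst → Prop) (n : ℕ) (σ : Fin n → Src) (δ : Fin n → Dst)
    (k : Fin n) (S : Src) (D : Dst) : Prop :=
  desired S D ∧ posS (σ k) ≤ posS S ∧ posD (δ k) ≤ posD D ∧
  ((k : ℕ) + 1 = n ∨ ∃ hk : (k : ℕ) + 1 < n,
    posS S < posS (σ ⟨(k : ℕ) + 1, hk⟩) ∨ posD D < posD (δ ⟨(k : ℕ) + 1, hk⟩))

open Fin.NatCast in
theorem Fin.exists_and_not_succ {N : ℕ} [NeZero N] {Q : Fin N → Prop}
    (hQ : ∃ i, Q i) (hnQ : ∃ i, ¬ Q i) : ∃ j, Q j ∧ ¬ Q (j + 1) := by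
  by_contra! hstep
  obtain ⟨i₀, hi₀⟩ := hQ
  have hiter : ∀ t : ℕ, Q (i₀ + t) := by
    intro t
    induction t with
    | zero => simpa using hi₀
    | succ t ih => simpa [add_assoc] using hstep _ ih
  obtain ⟨i, hi⟩ := hnQ
  apply hi
  simpa using hiter (i - i₀).val

theorem Fin.exists_apply_succ_le {N : ℕ} [NeZero N] {α : Type*} [LinearOrder α]
    (f : Fin N → α) : ∃ i, f (i + 1) ≤ f i := by
  obtain ⟨i, hi⟩ := Finite.exists_max f
  exact ⟨i, hi _⟩

namespace IsConvexCellular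

variable {Src Dst : Type*} {posS : Src → ℝ} {posD : Dst → ℝ}
  {desired heard : Src → Dst → Prop} (h : IsConvexCellular posS posD desired heard)
include h

theorem not_heard_of_posS_le_left {s s' : Src} {d : Dst} (hs : posS s ≤ posS s')
    (hs' : posS s' < posD d) (hnh : ¬ heard s' d) : ¬ heard s d := by
  rcases hs.eq_or_lt with heq | hlt
  · rwa [h.posS_inj heq]
  · exact h.destHearL s s' d hlt hs' hnh

theorem not_heard_of_posS_le_right {s s' : Src} {d : Dst} (hs : posS s' ≤ posS s)
    (hs' : posD d < posS s') (hnh : ¬ heard s' d) : ¬ heard s d := by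
  rcases hs.eq_or_lt with heq | hlt
  · rwa [← h.posS_inj heq]
  · exact h.destHearR s s' d hlt hs' hnh

theorem not_heard_of_posD_le_left {s : Src} {d d' : Dst} (hd : posD d ≤ posD d')
    (hd' : posD d' < posS s) (hnh : ¬ heard s d') : ¬ heard s d := by
  rcases hd.eq_or_lt with heq | hlt
  · rwa [h.posD_inj heq]
  · exact h.srcHearL d d' s hlt hd' hnh

theorem not_heard_of_posD_le_right {s : Src} {d d' : Dst} (hd : posD d' ≤ posD d)
    (hd' : posS s < posD d') (hnh : ¬ heard s d') : ¬ heard s d := by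
  rcases hd.eq_or_lt with heq | hlt
  · rwa [← h.posD_inj heq]
  · exact h.srcHearR d d' s hlt hd' hnh

theorem posS_lt_of_desired_of_not_heard {s s' : Src} {d : Dst} (hsd : desired s d)
    (hnh : ¬ heard s' d) (hd : posD d < posS s') : posS s < posS s' :=
  lt_of_not_ge fun hle => h.not_heard_of_posS_le_right hle hd hnh (h.desired_heard s d hsd)

theorem posD_lt_of_desired_of_not_heard {s : Src} {d d' : Dst} (hsd : desired s d)
    (hnh : ¬ heard s d') (hs : posS s < posD d') : posD d < posD d' :=
  lt_of_not_ge fun hle => h.not_heard_of_posD_le_right hle hs hnh (h.desired_heard s d hsd)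

theorem desired_of_posS_lt_of_posD_lt {s s' : Src} {d d' : Dst} (hsd : desired s d)
    (hsd' : desired s' d') (hs : posS s' < posS s) (hd : posD d < posD d') : desired s' d := by
  rcases lt_or_gt_of_ne (h.pos_ne s' d) with hlt | hgt
  · exact h.srcConvR d' d s' hd hlt hsd'
  · exact h.destConvR s s' d hs hgt hsd

theorem exists_flip_of_alternating {m : ℕ} {s : Fin (m + 1) → Src} {d : Fin (m + 1) → Dst}
    (hnh : ∀ i, ¬ heard (s i) (d i)) (hsd : ∀ i, desired (s i) (d (i + 1))) :
    ∃ j, posD (d j) < posS (s j) ∧ posS (s (j + 1)) < posD (d (j + 1)) := by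
  by_cases hall : ∀ i, posD (d i) < posS (s i)
  · obtain ⟨i, hi⟩ := Fin.exists_apply_succ_le fun i => posS (s i)
    exact absurd hi (h.posS_lt_of_desired_of_not_heard (hsd i) (hnh _) (hall _)).not_ge
  by_cases hnone : ∀ i, ¬ posD (d i) < posS (s i)
  · obtain ⟨i, hi⟩ := Fin.exists_apply_succ_le fun i => -posD (d i)
    have hlt := h.posD_lt_of_desired_of_not_heard (hsd i) (hnh i)
      ((not_lt.1 (hnone i)).lt_of_ne (h.pos_ne _ _))
    linarith
  simp only [not_forall, not_not] at hall hnone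
  obtain ⟨j, hj, hj₁⟩ := Fin.exists_and_not_succ hnone hall
  exact ⟨j, hj, (not_lt.1 hj₁).lt_of_ne (h.pos_ne _ _)⟩

theorem exists_orthogonal_of_hasAltCycleIn {W : Src → Dst → Prop} {s₀ : Src} {d₀ : Dst}
    (hW : ∀ S D, W S D → desired S D ∧ posS s₀ ≤ posS S ∧ posD d₀ ≤ posD D)
    (hc : HasAltCycleIn W heard) :
    ∃ S D, W S D ∧ ¬ heard S d₀ ∧ ¬ heard s₀ D := by
  obtain ⟨m, s, d, -, -, hcyc⟩ := hc
  have hsd i := hW _ _ (hcyc i).2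
  obtain ⟨j, hj, hj₁⟩ := h.exists_flip_of_alternating (fun i => (hcyc i).1) fun i => (hsd i).1
  have hd₀ : posD d₀ ≤ posD (d j) := by simpa using (hsd (j - 1)).2.2
  exact ⟨s j, d (j + 1), (hcyc j).2, h.not_heard_of_posD_le_left hd₀ hj (hcyc j).1,
    h.not_heard_of_posS_le_left (hsd (j + 1)).2.1 hj₁ (hcyc (j + 1)).1⟩

end IsConvexCellular

section Blocks

variable {Src Dst : Type*} {posS : Src → ℝ} {posD : Dst → ℝ}
  {desired : Src → Dst → Prop} {n : ℕ} {σ : Fin n → Src} {δ : Fin n → Dst}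
  {S : Src} {D : Dst}

theorem exists_inBlock (hSD : desired S D)
    (h₀ : ∃ k, posS (σ k) ≤ posS S ∧ posD (δ k) ≤ posD D) :
    ∃ k, InBlock posS posD desired n σ δ k S D := by
  classical
  obtain ⟨k₀, hk₀⟩ := h₀
  obtain ⟨k, hk, hmax⟩ := (Finset.univ.filter fun k => posS (σ k) ≤ posS S ∧
    posD (δ k) ≤ posD D).exists_max_image Fin.val ⟨k₀, by simpa using hk₀⟩
  rw [Finset.mem_filter] at hk
  refine ⟨k, hSD, hk.2.1, hk.2.2, ?_⟩
  by_cases hlast : (k : ℕ) + 1 = n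
  · exact .inl hlast
  have hk₁ : (k : ℕ) + 1 < n := by omega
  refine .inr ⟨hk₁, ?_⟩
  by_contra! hge
  have := hmax ⟨k + 1, hk₁⟩ (by simpa using hge)
  simp at this

theorem not_inBlock_of_lt (hmonoS : Monotone fun k => posS (σ k))
    (hmonoD : Monotone fun k => posD (δ k)) {k k' : Fin n} (hlt : k < k')
    (hk : InBlock posS posD desired n σ δ k S D) :
    ¬ InBlock posS posD desired n σ δ k' S D := by
  rintro ⟨-, hS, hD, -⟩
  rcases hk.2.2.2 with hlast | ⟨hk₁, hbound⟩
  · have : (k : ℕ) < k' := hlt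
    omega
  · have hle : (⟨k + 1, hk₁⟩ : Fin n) ≤ k' := hlt
    rcases hbound with hbound | hbound
    · exact (hmonoS hle).not_gt (hS.trans_lt hbound)
    · exact (hmonoD hle).not_gt (hD.trans_lt hbound)

theorem InBlock.eq (hmonoS : Monotone fun k => posS (σ k))
    (hmonoD : Monotone fun k => posD (δ k)) {k k' : Fin n}
    (hk : InBlock posS posD desired n σ δ k S D)
    (hk' : InBlock posS posD desired n σ δ k' S D) : k = k' := by
  rcases lt_trichotomy k k' with hlt | heq | hgt
  · exact absurd hk' (not_inBlock_of_lt hmonoS hmonoD hlt hk)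
  · exact heq
  · exact absurd hk (not_inBlock_of_lt hmonoS hmonoD hgt hk')

theorem IsConvexCellular.not_orthogonal_of_inBlock {heard : Src → Dst → Prop}
    (h : IsConvexCellular posS posD desired heard) (hn : 0 < n)
    (hmonoS : StrictMono fun k => posS (σ k)) (hdes : ∀ k, desired (σ k) (δ k))
    (horth : ∀ (k : Fin n) (hk : (k : ℕ) + 1 < n), ¬ heard (σ ⟨(k : ℕ) + 1, hk⟩) (δ k))
    (hmin : ∀ (k : Fin n) (hk : (k : ℕ) + 1 < n) (S : Src) (D : Dst),
      desired S D → posS (σ k) ≤ posS S → posD (δ k) ≤ posD D →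
      ¬ heard S (δ k) → ¬ heard (σ k) D →
      posS (σ ⟨(k : ℕ) + 1, hk⟩) < posS S ∨
        (posS (σ ⟨(k : ℕ) + 1, hk⟩) = posS S ∧
          posD (δ ⟨(k : ℕ) + 1, hk⟩) ≤ posD D))
    (hterm : ∀ (S : Src) (D : Dst),
      desired S D → posS (σ ⟨n - 1, Nat.sub_one_lt_of_lt hn⟩) ≤ posS S →
      posD (δ ⟨n - 1, Nat.sub_one_lt_of_lt hn⟩) ≤ posD D →
      ¬ heard S (δ ⟨n - 1, Nat.sub_one_lt_of_lt hn⟩) →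
      ¬ heard (σ ⟨n - 1, Nat.sub_one_lt_of_lt hn⟩) D → False)
    {k : Fin n} (hSD : InBlock posS posD desired n σ δ k S D)
    (hS : ¬ heard S (δ k)) (hD : ¬ heard (σ k) D) : False := by
  obtain ⟨hsd, hσ, hδ, hlast | ⟨hk, hbound⟩⟩ := hSD
  · have hk : (⟨n - 1, Nat.sub_one_lt_of_lt hn⟩ : Fin n) = k :=
      Fin.ext (by dsimp only; omega)
    rw [hk] at hterm
    exact hterm S D hsd hσ hδ hS hD
  set k₁ : Fin n := ⟨k + 1, hk⟩
  have hS₁ : posS (σ k₁) < posS S := by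
    rcases hmin k hk S D hsd hσ hδ hS hD with hlt | ⟨heq, hle⟩
    · exact hlt
    · rcases hbound with hb | hb <;> linarith
  have hD₁ : posD D < posD (δ k₁) := hbound.resolve_left hS₁.not_gt
  have hsd₁ : desired (σ k₁) D := h.desired_of_posS_lt_of_posD_lt hsd (hdes k₁) hS₁ hD₁
  have hσ₁ : posS (σ k) ≤ posS (σ k₁) := (hmonoS (Fin.lt_def.2 (Nat.lt_succ_self k))).le
  rcases hmin k hk (σ k₁) D hsd₁ hσ₁ hδ (horth k hk) hD with hlt | ⟨-, hle⟩
  · exact hlt.false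
  · linarith

end Blocks

/-- Suppose the left-to-right greedy orthogonal scheme selects the messages
`σ 0 → δ 0, …, σ (n-1) → δ (n-1)`: it starts with the leftmost source and
destination, each chosen message is lexicographically minimal among the
remaining messages orthogonal to the previously chosen one, and after the last
one no orthogonal message remains.  Then the message set partitions into `n`
blocks (each message lies in exactly one block), where the `k`-th block
consists of the messages originating from sources in `[σ k, σ (k+1))` or
intended for destinations in `[δ k, δ (k+1))`, and each block induces an
acyclic demand graph. -/
theorem stmt8 {Src Dst : Type*} (posS : Src → ℝ) (posD : Dst → ℝ)
    (desired heard : Src → Dst → Prop)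
    (h : IsConvexCellular posS posD desired heard)
    (n : ℕ) (hn : 0 < n) (σ : Fin n → Src) (δ : Fin n → Dst)
    (hmonoS : StrictMono fun k => posS (σ k))
    (hmonoD : StrictMono fun k => posD (δ k))
    (hdes : ∀ k, desired (σ k) (δ k))
    (hleftS : ∀ s, posS (σ ⟨0, hn⟩) ≤ posS s)
    (hleftD : ∀ d, posD (δ ⟨0, hn⟩) ≤ posD d)
    (horth : ∀ (k : Fin n) (hk : (k : ℕ) + 1 < n),
      ¬ heard (σ ⟨(k : ℕ) + 1, hk⟩) (δ k) ∧ ¬ heard (σ k) (δ ⟨(k : ℕ) + 1, hk⟩))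
    (hmin : ∀ (k : Fin n) (hk : (k : ℕ) + 1 < n) (S : Src) (D : Dst),
      desired S D → posS (σ k) ≤ posS S → posD (δ k) ≤ posD D →
      ¬ heard S (δ k) → ¬ heard (σ k) D →
      posS (σ ⟨(k : ℕ) + 1, hk⟩) < posS S ∨
        (posS (σ ⟨(k : ℕ) + 1, hk⟩) = posS S ∧ posD (δ ⟨(k : ℕ) + 1, hk⟩) ≤ posD D))
    (hterm : ∀ (S : Src) (D : Dst),
      desired S D → posS (σ ⟨n - 1, by omega⟩) ≤ posS S →
      posD (δ ⟨n - 1, by omega⟩) ≤ posD D →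
      ¬ heard S (δ ⟨n - 1, by omega⟩) → ¬ heard (σ ⟨n - 1, by omega⟩) D → False) :
    (∀ S D, desired S D → ∃! k : Fin n, InBlock posS posD desired n σ δ k S D) ∧
    (∀ k : Fin n, ¬ HasAltCycleIn (InBlock posS posD desired n σ δ k) heard) := by
  refine ⟨fun S D hSD => ?_, fun k hc => ?_⟩
  · obtain ⟨k, hk⟩ := exists_inBlock hSD ⟨⟨0, hn⟩, hleftS S, hleftD D⟩
    exact ⟨k, hk, fun k' hk' => hk'.eq hmonoS.monotone hmonoD.monotone hk⟩
  · obtain ⟨S, D, hSD, hS, hD⟩ :=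
      h.exists_orthogonal_of_hasAltCycleIn (fun S D hSD => ⟨hSD.1, hSD.2.1, hSD.2.2.1⟩) hc
    exact h.not_orthogonal_of_inBlock hn hmonoS hdes (fun k hk => (horth k hk).1) hmin hterm
      hSD hS hD
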